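/- arXiv:2211.02993 — 5 statements merged into one kernel-verified Lean document; each statement's English description precedes it below -/
import Mathlib

section
/- If P is a decreasing tableau and x is a P-ejectable value, then row(P) is Hecke-equivalent to row(P)·x, i.e., appending x to the row reading word of P does not change its class in the 0-Hecke monoid. -/
/-- Elementary 0-Hecke relations on words. -/
inductive HeckeRel : List ℕ → List ℕ → Prop
  | idem (i : ℕ) : HeckeRel [i, i] [i]
  | braid (i : ℕ) : HeckeRel [i, i+1, i] [i+1, i, i+1]
  | comm (i j : ℕ) (h : i + 2 ≤ j ∨ j + 2 ≤ i) : HeckeRel [i, j] [j, i]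

/-- Hecke equivalence: the congruence on words generated by the 0-Hecke relations. -/
inductive HeckeEquiv : List ℕ → List ℕ → Prop
  | of {a b : List ℕ} : HeckeRel a b → HeckeEquiv a b
  | refl (a : List ℕ) : HeckeEquiv a a
  | symm {a b : List ℕ} : HeckeEquiv a b → HeckeEquiv b a
  | trans {a b c : List ℕ} : HeckeEquiv a b → HeckeEquiv b c → HeckeEquiv a c
  | append_congr {a b c d : List ℕ} :
      HeckeEquiv a b → HeckeEquiv c d → HeckeEquiv (a ++ c) (b ++ d)

/-- The permutation of `ℕ` associated to a word (letter `i` ↦ the simple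
transposition swapping `i` and `i+1`). -/
def wordPerm (a : List ℕ) : Equiv.Perm ℕ := (a.map fun i => Equiv.swap i (i + 1)).prod

/-- A word on the alphabet of positive integers. -/
def IsPosWord (a : List ℕ) : Prop := ∀ x ∈ a, 0 < x

/-- `a` is a reduced word of the permutation `w`: it represents `w` and has
minimum length among words representing `w`. -/
def IsReducedWordOf (w : Equiv.Perm ℕ) (a : List ℕ) : Prop :=
  IsPosWord a ∧ wordPerm a = w ∧
    ∀ b : List ℕ, IsPosWord b → wordPerm b = w → a.length ≤ b.length

/-- `a` is a Hecke word for `w`: it is Hecke-equivalent to a reduced word of `w`. -/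
def IsHeckeWord (w : Equiv.Perm ℕ) (a : List ℕ) : Prop :=
  IsPosWord a ∧ ∃ b, IsReducedWordOf w b ∧ HeckeEquiv a b

/-- A word is reduced if it has minimum length in its Hecke-equivalence class. -/
def IsReducedWord (a : List ℕ) : Prop := ∀ b, HeckeEquiv a b → a.length ≤ b.length

/-- The `i`-th row (1-indexed) of a tableau presented as a list of rows. -/
def RowOf (T : List (List ℕ)) (i : ℕ) : List ℕ := T.getD (i - 1) []

/-- A decreasing tableau: nonempty rows of positive integers of weakly decreasing
lengths, strictly decreasing along rows and down columns. -/
def IsDecreasingTableau (T : List (List ℕ)) : Prop :=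
  (∀ R ∈ T, R ≠ []) ∧
  (∀ R ∈ T, ∀ x ∈ R, 0 < x) ∧
  (∀ R ∈ T, R.Chain' (fun x y => y < x)) ∧
  T.Chain' (fun R S => S.length ≤ R.length ∧ ∀ j < S.length, S.getD j 0 < R.getD j 0)

/-- The shape of a tableau: the list of its row lengths. -/
def shape (T : List (List ℕ)) : List ℕ := T.map List.length

/-- `(r,c)` (1-indexed, matrix style) is a removable cell of `T`: the cell at the
end of row `r` and at the bottom of column `c`. -/
def IsRemovable (T : List (List ℕ)) (r c : ℕ) : Prop :=
  1 ≤ r ∧ r ≤ T.length ∧ 1 ≤ c ∧ (RowOf T r).length = c ∧ (RowOf T (r + 1)).length < c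

/-- Ejectability (recursive): `x` is ejectable in `T` if `x` is in the first row of
`T` and either `x-1` is not in the first row, or it is and `x-1` is ejectable in
the tableau with the first row removed. -/
def Ejectable : List (List ℕ) → ℕ → Prop
  | [], _ => False
  | R :: rest, x => x ∈ R ∧ (x - 1 ∉ R ∨ Ejectable rest (x - 1))

/-- Boolean version of ejectability, used inside the algorithms. -/
def ejectableB : List (List ℕ) → ℕ → Bool
  | [], _ => false
  | R :: rest, x => R.contains x && (!(R.contains (x - 1)) || ejectableB rest (x - 1))

/-- Smallest ejectable value `x` in `T` with `lo < x < hi`, if any. -/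
def smallestEjectableBetween (T : List (List ℕ)) (lo hi : ℕ) : Option ℕ :=
  ((T.headD []).filter fun x => ejectableB T x && decide (lo < x) && decide (x < hi)).min?

/-- Largest ejectable value `x` in `T` with `lo < x < hi`, if any. -/
def largestEjectableBetween (T : List (List ℕ)) (lo hi : ℕ) : Option ℕ :=
  ((T.headD []).filter fun x => ejectableB T x && decide (lo < x) && decide (x < hi)).max?

/-- Replace all occurrences of `old` by `new` in a row. -/
def replaceVal (R : List ℕ) (old new : ℕ) : List ℕ :=
  R.map fun y => if y = old then new else y

/-- One step of the reverse insertion Ψ at a row `R`, given the already-processed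
lower tableau `B = P'_{>i}`, the value `m1 = m_{i+1}` and flag `a1 = α_{i+1}`.
Returns the new row, the value `m_i` and the flag `α_i`. -/
def psiRowStep (R : List ℕ) (B : List (List ℕ)) (m1 : ℕ) (a1 : Bool) :
    List ℕ × ℕ × Bool :=
  let mi := ((R.filter fun y => decide (m1 < y)).min?).getD 0
  if R.contains (mi - 1) then (R, mi, a1)                        -- Dummy
  else if a1 && !(R.contains m1) then (replaceVal R mi m1, mi, true)  -- Direct Repl.
  else
    match smallestEjectableBetween B m1 mi with
    | some x => (replaceVal R mi x, mi, true)                    -- Indirect Repl.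
    | none => (R, mi, false)                                     -- No Replacement

/-- Process a list of rows (top part of the tableau) from bottom to top, on top of
the already-processed lower tableau `B`, with initial ejected value `m` and flag `a`.
Returns the full processed tableau together with the last ejected value and flag. -/
def psiRows : List (List ℕ) → List (List ℕ) → ℕ → Bool → List (List ℕ) × ℕ × Bool
  | [], B, m, a => (B, m, a)
  | R :: rest, B, m, a =>
    let s := psiRows rest B m a
    let t := psiRowStep R s.1 s.2.1 s.2.2
    (t.1 :: s.1, t.2.1, t.2.2)

/-- The part of the tableau below the processed rows, after the initialization step
of Ψ (for `α = 1` the removable cell at the end of row `r` is deleted). -/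
def psiBase (P : List (List ℕ)) (r : ℕ) (α : Bool) : List (List ℕ) :=
  if α then
    (if (RowOf P r).dropLast = [] then P.drop r else (RowOf P r).dropLast :: P.drop r)
  else P.drop r

/-- The rows of `P` to be processed by Ψ. -/
def psiUpper (P : List (List ℕ)) (r : ℕ) (α : Bool) : List (List ℕ) :=
  if α then P.take (r - 1) else P.take r

/-- The initial value `m_{r+1}` (for `α = 0`) or `m_r` (for `α = 1`) fed to Ψ. -/
def psiM (P : List (List ℕ)) (r : ℕ) (α : Bool) : ℕ :=
  if α then ((RowOf P r).getLast?).getD 0 else 0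

/-- The state of the reverse insertion Ψ on `(P, (r,·), α)` after processing row `i`:
the working tableau restricted to rows `≥ i` (i.e. `P'_{≥ i}`), the value `m_i`
ejected from row `i`, and the flag `α_i`. -/
def psiStage (P : List (List ℕ)) (r : ℕ) (α : Bool) (i : ℕ) :
    List (List ℕ) × ℕ × Bool :=
  psiRows ((psiUpper P r α).drop (i - 1)) (psiBase P r α) (psiM P r α) α

/-- The reverse insertion Ψ: input a decreasing tableau `P`, the row index `r` of a
removable cell, and `α ∈ {0,1}`; output the new tableau `P'` and the value `m`. -/
def psi (P : List (List ℕ)) (r : ℕ) (α : Bool) : List (List ℕ) × ℕ :=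
  ((psiStage P r α 1).1, (psiStage P r α 1).2.1)

/-- The forward insertion of a value `N` into a tableau (list of rows, processed
top-down). Returns the new tableau, the row and column (1-indexed) of the
terminating cell, and the flag `α`. -/
def phiRows : ℕ → List (List ℕ) → List (List ℕ) × ℕ × ℕ × Bool
  | N, [] => ([[N]], 1, 1, true)                                   -- T1 (new row)
  | N, R :: rest =>
    match (R.filter fun y => decide (y ≤ N)).max? with
    | none => ((R ++ [N]) :: rest, 1, R.length + 1, true)          -- T1 (append)
    | some n1 =>
      let R' := replaceVal R n1 N
      let j := R.idxOf n1
      let n2 := R.getD (j + 1) 0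
      if n1 = N && R.contains (N - 1) then                         -- Dummy
        let o := phiRows (N - 1) rest
        (R' :: o.1, o.2.1 + 1, o.2.2.1, o.2.2.2)
      else if decide (n1 < N) && !(ejectableB rest n1) then        -- Direct Repl.
        let o := phiRows n1 rest
        (R' :: o.1, o.2.1 + 1, o.2.2.1, o.2.2.2)
      else
        match largestEjectableBetween rest n2 n1 with
        | some y =>                                                -- IR1
          let o := phiRows y rest
          (R' :: o.1, o.2.1 + 1, o.2.2.1, o.2.2.2)
        | none =>
          if n2 = 0 then (R' :: rest, 1, j + 1, false)             -- T2
          else                                                     -- IR2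
            let o := phiRows n2 rest
            (R' :: o.1, o.2.1 + 1, o.2.2.1, o.2.2.2)

/-- The forward insertion Φ of `m` into the decreasing tableau `P`. -/
def phi (P : List (List ℕ)) (m : ℕ) : List (List ℕ) × ℕ × ℕ × Bool := phiRows m P

/-- Edelman–Greene reverse row insertion: process rows bottom-to-top, always
replacing `m_i` by `m_{i+1}`. -/
def egRows : List (List ℕ) → List (List ℕ) → ℕ → List (List ℕ) × ℕ
  | [], B, m => (B, m)
  | R :: rest, B, m =>
    let s := egRows rest B m
    let mi := ((R.filter fun y => decide (s.2 < y)).min?).getD 0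
    (replaceVal R mi s.2 :: s.1, mi)

/-- EG reverse row insertion at the removable cell in row `r` of `P`. -/
def egRev (P : List (List ℕ)) (r : ℕ) : List (List ℕ) × ℕ :=
  egRows (P.take (r - 1)) (psiBase P r true) (psiM P r true)

/-- The row reading word: rows from bottom to top, each left to right. -/
def rowWord (T : List (List ℕ)) : List ℕ := T.reverse.flatten

/-- The shape obtained by removing the cell at the end of row `r` (1-indexed). -/
def shapeMinus (sh : List ℕ) (r : ℕ) : List ℕ :=
  (sh.set (r - 1) (sh.getD (r - 1) 0 - 1)).filter fun n => decide (n ≠ 0)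

/-- The shape obtained by adding one cell at the end of row `r` (1-indexed). -/
def shapePlus (sh : List ℕ) (r : ℕ) : List ℕ :=
  if r ≤ sh.length then sh.set (r - 1) (sh.getD (r - 1) 0 + 1) else sh ++ [1]

/-- The bumping path of the removable cell `(r,c)` of `T`: `m r` is the entry at
`(r,c)`, and for `1 ≤ i < r`, `m i` is the smallest entry of row `i` of `T`
exceeding `m (i+1)`. -/
def IsBumpingPath (T : List (List ℕ)) (r c : ℕ) (m : ℕ → ℕ) : Prop :=
  m r = (RowOf T r).getD (c - 1) 0 ∧
  ∀ i, 1 ≤ i → i < r →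
    m i ∈ RowOf T i ∧ m (i + 1) < m i ∧ ∀ y ∈ RowOf T i, m (i + 1) < y → m i ≤ y

/-- A compatible pair of words `(a, i)`: same length, positive letters, `i` weakly
decreasing, and equal consecutive `i`-letters force strictly increasing `a`-letters. -/
def CompatiblePair (a i : List ℕ) : Prop :=
  a.length = i.length ∧ IsPosWord a ∧ IsPosWord i ∧
    (i.zip a).Chain' fun p q => q.1 ≤ p.1 ∧ (p.1 = q.1 → p.2 < q.2)

/-- A set-valued tableau (of partition shape, presented as a list of rows of
finite sets): nonempty sets of positive integers, `max ≤ min` along rows,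
`max < min` down columns. -/
def IsSVT (Q : List (List (Finset ℕ))) : Prop :=
  (∀ R ∈ Q, R ≠ []) ∧
  Q.Chain' (fun R S => S.length ≤ R.length) ∧
  (∀ R ∈ Q, ∀ S ∈ R, S.Nonempty ∧ ∀ x ∈ S, 0 < x) ∧
  (∀ R ∈ Q, R.Chain' fun S S' => ∀ x ∈ S, ∀ y ∈ S', x ≤ y) ∧
  Q.Chain' fun R S => ∀ j < S.length, ∀ x ∈ R.getD j ∅, ∀ y ∈ S.getD j ∅, x < y

/-- Record the value `k` in the recording tableau `Q` at cell `(r,c)`: in a new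
cell if `newCell = true`, otherwise adding `k` to the set already there. -/
def recordCell (Q : List (List (Finset ℕ))) (r c k : ℕ) (newCell : Bool) :
    List (List (Finset ℕ)) :=
  if newCell then
    (if r ≤ Q.length then Q.set (r - 1) (Q.getD (r - 1) [] ++ [{k}]) else Q ++ [[{k}]])
  else
    Q.set (r - 1)
      ((Q.getD (r - 1) []).set (c - 1) (insert k ((Q.getD (r - 1) []).getD (c - 1) ∅)))

/-- The insertion correspondence: insert the letters of `a` successively by Φ,
recording the insertion of `a_k` with the value `i_k`. -/
def tildePhi (a i : List ℕ) : List (List ℕ) × List (List (Finset ℕ)) :=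
  ((a.zip i).reverse).foldl
    (fun PQ x =>
      let o := phi PQ.1 x.1
      (o.1, recordCell PQ.2 o.2.1 o.2.2.1 x.2 o.2.2.2))
    ([], [])

/-- The weight (multiset of entries) of a set-valued tableau. -/
def svtWeight (Q : List (List (Finset ℕ))) : Multiset ℕ :=
  (Q.flatten.map Finset.val).sum

/-!
In a strictly decreasing row `R` containing `x`, the letters after `x` are smaller than `x`.
If `x - 1 ∉ R` they all commute with `x`, so an appended `x` travels back to the `x` of `R`
and is absorbed by `x x ≡ x`. If `x - 1 ∈ R`, it sits right after `x`, and the braid relation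
turns `(x-1) · R` into `R · x`; the extra letter `x - 1` in front of `R` is produced by
induction, since `x - 1` is ejectable in the rows below, whose reading word precedes `R`.
-/

infix:50 " ≡ₕ " => HeckeEquiv

namespace HeckeEquiv

instance : Trans HeckeEquiv HeckeEquiv HeckeEquiv := ⟨HeckeEquiv.trans⟩

theorem append_left (l : List ℕ) {a b : List ℕ} (h : a ≡ₕ b) : l ++ a ≡ₕ l ++ b :=
  .append_congr (.refl l) h

theorem append_right {a b : List ℕ} (h : a ≡ₕ b) (l : List ℕ) : a ++ l ≡ₕ b ++ l :=
  .append_congr h (.refl l)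

theorem cons_append_singleton_of_far {x : ℕ} {l : List ℕ}
    (h : ∀ y ∈ l, x + 2 ≤ y ∨ y + 2 ≤ x) : x :: l ≡ₕ l ++ [x] := by
  induction l with
  | nil => exact .refl _
  | cons y t ih =>
    calc x :: y :: t ≡ₕ y :: x :: t :=
          append_right (.of (.comm x y (h y List.mem_cons_self))) t
      _ = [y] ++ x :: t := rfl
      _ ≡ₕ _ := append_left [y] (ih fun z hz => h z (List.mem_cons_of_mem y hz))

end HeckeEquiv

theorem List.exists_eq_append_cons_of_pairwise {α : Type*} {r : α → α → Prop} {R : List α}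
    {x : α} (hR : R.Pairwise r) (hx : x ∈ R) :
    ∃ A B, R = A ++ x :: B ∧ (∀ a ∈ A, r a x) ∧ (∀ b ∈ B, r x b) ∧ B.Pairwise r := by
  obtain ⟨A, B, rfl⟩ := List.append_of_mem hx
  obtain ⟨-, hxB, hAxB⟩ := List.pairwise_append.mp hR
  obtain ⟨hxB, hB⟩ := List.pairwise_cons.mp hxB
  exact ⟨A, B, rfl, fun a ha => hAxB a ha x List.mem_cons_self, hxB, hB⟩

theorem heckeEquiv_append_singleton_of_pred_notMem {R : List ℕ} {x : ℕ}
    (hR : R.Pairwise (· > ·)) (hx : x ∈ R) (hx1 : x - 1 ∉ R) : R ≡ₕ R ++ [x] := by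
  obtain ⟨A, B, rfl, -, hB, -⟩ := List.exists_eq_append_cons_of_pairwise hR hx
  have hfar : ∀ b ∈ B, x + 2 ≤ b ∨ b + 2 ≤ x := fun b hb => by
    have hne : b ≠ x - 1 := by rintro rfl; simp [hb] at hx1
    have := hB b hb
    omega
  refine .symm ?_
  calc A ++ x :: B ++ [x] = A ++ ([x] ++ (B ++ [x])) := by simp
    _ ≡ₕ A ++ ([x] ++ (x :: B)) :=
        .append_left A (.append_left [x] (HeckeEquiv.cons_append_singleton_of_far hfar).symm)
    _ = A ++ ([x, x] ++ B) := rfl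
    _ ≡ₕ A ++ ([x] ++ B) := .append_left A (.append_right (.of (.idem x)) B)
    _ = A ++ x :: B := rfl

theorem heckeEquiv_cons_append_succ {R : List ℕ} {y : ℕ}
    (hR : R.Pairwise (· > ·)) (hy1 : y + 1 ∈ R) (hy : y ∈ R) : y :: R ≡ₕ R ++ [y + 1] := by
  obtain ⟨A, B, rfl, hA, hB, hBdec⟩ := List.exists_eq_append_cons_of_pairwise hR hy1
  have hyB : y ∈ B := by
    rcases List.mem_append.mp hy with h | h
    · exact absurd (hA y h) (by omega)
    · simpa using h
  obtain ⟨C, D, rfl, hC, hD, -⟩ := List.exists_eq_append_cons_of_pairwise hBdec hyB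
  obtain rfl : C = [] := List.eq_nil_iff_forall_not_mem.mpr fun c hc => by
    have := hC c hc
    have := hB c (by simp [hc])
    omega
  rw [List.nil_append]
  have hfarA : ∀ a ∈ A, y + 2 ≤ a ∨ a + 2 ≤ y := fun a ha => Or.inl (hA a ha)
  have hfarD : ∀ d ∈ D, y + 1 + 2 ≤ d ∨ d + 2 ≤ y + 1 := fun d hd => by
    have := hD d hd
    omega
  calc y :: (A ++ (y + 1) :: y :: D) = y :: A ++ (y + 1) :: y :: D := rfl
    _ ≡ₕ A ++ [y] ++ (y + 1) :: y :: D :=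
        .append_right (.cons_append_singleton_of_far hfarA) _
    _ = A ++ ([y, y + 1, y] ++ D) := by simp
    _ ≡ₕ A ++ ([y + 1, y, y + 1] ++ D) := .append_left A (.append_right (.of (.braid y)) D)
    _ = A ++ [y + 1, y] ++ ((y + 1) :: D) := by simp
    _ ≡ₕ A ++ [y + 1, y] ++ (D ++ [y + 1]) :=
        .append_left _ (.cons_append_singleton_of_far hfarD)
    _ = A ++ (y + 1) :: y :: D ++ [y + 1] := by simp

theorem rowWord_cons (R : List ℕ) (P : List (List ℕ)) : rowWord (R :: P) = rowWord P ++ R := by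
  simp [rowWord]

theorem heckeEquiv_rowWord_append_of_ejectable {P : List (List ℕ)} {x : ℕ}
    (hdec : ∀ R ∈ P, R.Pairwise (· > ·)) (hpos : ∀ R ∈ P, ∀ y ∈ R, 0 < y)
    (hx : Ejectable P x) : rowWord P ≡ₕ rowWord P ++ [x] := by
  induction P generalizing x with
  | nil => exact hx.elim
  | cons R P ih =>
    obtain ⟨hxR, hx1⟩ := hx
    have hR := hdec R List.mem_cons_self
    rw [rowWord_cons]
    by_cases hx1R : x - 1 ∈ R
    · obtain ⟨y, rfl⟩ : ∃ y, x = y + 1 :=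
        Nat.exists_eq_add_one.mpr (hpos R List.mem_cons_self x hxR)
      have hyR : y ∈ R := by simpa using hx1R
      have hy : Ejectable P y := by simpa [hyR] using hx1
      have ih := ih (fun S hS => hdec S (List.mem_cons_of_mem R hS))
        (fun S hS => hpos S (List.mem_cons_of_mem R hS)) hy
      calc rowWord P ++ R ≡ₕ rowWord P ++ [y] ++ R := .append_right ih R
        _ = rowWord P ++ y :: R := by simp
        _ ≡ₕ rowWord P ++ (R ++ [y + 1]) :=
            .append_left _ (heckeEquiv_cons_append_succ hR hxR hyR)
        _ = rowWord P ++ R ++ [y + 1] := by simp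
    · calc rowWord P ++ R ≡ₕ rowWord P ++ (R ++ [x]) :=
            .append_left _ (heckeEquiv_append_singleton_of_pred_notMem hR hxR hx1R)
        _ = rowWord P ++ R ++ [x] := by simp

/-- if `x` is `P`-ejectable then `row(P) ≡_H row(P)·x`. -/
theorem statement2 (P : List (List ℕ)) (x : ℕ)
    (hP : IsDecreasingTableau P) (hx : Ejectable P x) :
    HeckeEquiv (rowWord P) (rowWord P ++ [x]) :=
  heckeEquiv_rowWord_append_of_ejectable
    (fun R hR => List.isChain_iff_pairwise.mp (hP.2.2.1 R hR)) hP.2.1 hx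
end

section
/- Let P be a decreasing tableau with a removable cell (r,c), and let m_r < m_{r-1} < ⋯ < m_1 be the bumping path of (r,c) in P. Then for all 1 ≤ i < j ≤ r, the occurrence of m_i in row i of P is weakly to the right of the occurrence of m_j in row j of P (i.e., its column index is weakly larger). -/
/-!
It suffices to compare consecutive rows. If `m (i+1)` sits in column `k` of row `i+1`, the
entry of row `i` above it exceeds `m (i+1)` by column strictness, so the minimality of `m i`
bounds `m i` by that entry; as row `i` is strictly decreasing, `m i` lies in column `k` or
further right.
-/

namespace IsDecreasingTableau

variable {T : List (List ℕ)}

theorem sortedGT_rowOf (hT : IsDecreasingTableau T) (i : ℕ) : (RowOf T i).SortedGT := by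
  unfold RowOf
  rcases lt_or_ge (i - 1) T.length with h | h
  · rw [List.getD_eq_getElem _ _ h]
    exact (hT.2.2.1 _ (List.getElem_mem h)).sortedGT
  · rw [List.getD_eq_default _ _ h]
    exact List.Pairwise.nil.sortedGT

theorem getElem_rowOf_succ_lt (hT : IsDecreasingTableau T) {i k : ℕ} (hi : 1 ≤ i)
    (hk : k < (RowOf T (i + 1)).length) :
    ∃ hk' : k < (RowOf T i).length, (RowOf T (i + 1))[k] < (RowOf T i)[k] := by
  have hiT : i < T.length := by
    by_contra! h
    rw [RowOf, List.getD_eq_default _ _ (by omega)] at hk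
    exact Nat.not_lt_zero k hk
  have hcol := List.isChain_iff_getElem.mp hT.2.2.2 (i - 1) (by omega)
  simp only [show i - 1 + 1 = i by omega] at hcol
  simp only [RowOf, List.getD_eq_getElem _ _ hiT, show i + 1 - 1 = i from rfl,
    List.getD_eq_getElem _ _ (show i - 1 < T.length by omega)] at hk ⊢
  have hk' := hk.trans_le hcol.1
  refine ⟨hk', ?_⟩
  simpa only [List.getD_eq_getElem _ _ hk, List.getD_eq_getElem _ _ hk'] using hcol.2 k hk

end IsDecreasingTableau

namespace IsBumpingPath

variable {T : List (List ℕ)} {r c : ℕ} {m : ℕ → ℕ}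

theorem mem_rowOf (hrc : IsRemovable T r c) (hm : IsBumpingPath T r c m) {j : ℕ}
    (hj : 1 ≤ j) (hjr : j ≤ r) : m j ∈ RowOf T j := by
  rcases hjr.lt_or_eq with hjr | rfl
  · exact (hm.2 j hj hjr).1
  · have hc : c - 1 < (RowOf T j).length := by have := hrc.2.2; omega
    rw [hm.1, List.getD_eq_getElem _ _ hc]
    exact List.getElem_mem hc

theorem idxOf_succ_le_idxOf (hT : IsDecreasingTableau T) (hrc : IsRemovable T r c)
    (hm : IsBumpingPath T r c m) {i : ℕ} (hi : 1 ≤ i) (hir : i < r) :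
    (RowOf T (i + 1)).idxOf (m (i + 1)) ≤ (RowOf T i).idxOf (m i) := by
  set k := (RowOf T (i + 1)).idxOf (m (i + 1))
  have hk : k < _ := List.idxOf_lt_length_iff.mpr (hm.mem_rowOf hrc (by omega : 1 ≤ i + 1) hir)
  obtain ⟨hk', hcol⟩ := hT.getElem_rowOf_succ_lt hi hk
  rw [List.getElem_idxOf] at hcol
  obtain ⟨hmem, -, hmin⟩ := hm.2 i hi hir
  have hp := List.idxOf_lt_length_iff.mpr hmem
  have hle : (RowOf T i)[(RowOf T i).idxOf (m i)] ≤ (RowOf T i)[k] := by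
    rw [List.getElem_idxOf]
    exact hmin _ (List.getElem_mem hk') hcol
  exact (hT.sortedGT_rowOf i).getElem_le_getElem_iff.mp hle

end IsBumpingPath

/-- along a bumping path, the occurrence of `m i` in row `i` is weakly
to the right of the occurrence of `m j` in row `j`, for `i < j`. -/
theorem statement3 (T : List (List ℕ)) (r c : ℕ) (m : ℕ → ℕ)
    (hT : IsDecreasingTableau T) (hrc : IsRemovable T r c)
    (hm : IsBumpingPath T r c m) :
    ∀ i j, 1 ≤ i → i < j → j ≤ r →
      (RowOf T j).idxOf (m j) ≤ (RowOf T i).idxOf (m i) := by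
  intro i j hi hij hjr
  induction j, hij using Nat.le_induction with
  | base => exact hm.idxOf_succ_le_idxOf hT hrc hi hjr
  | succ j hij ih =>
    exact (hm.idxOf_succ_le_idxOf hT hrc (by omega) hjr).trans (ih (by omega))
end

section
/- Let P be a decreasing tableau with a removable cell, and let m_r < ⋯ < m_1 be the bumping path of that cell in P. Then m_1, the entry of the bumping path in the first row, is a P-ejectable value. -/
/-!
Walk up the bumping path. The bottom entry `m_r` is the last, hence smallest, entry of its
row, so `m_r - 1` is missing from row `r`. Higher up, if `m_i - 1` occurs in row `i`, then it
cannot exceed `m_{i+1}`, because `m_i` is the smallest entry of row `i` above `m_{i+1}`;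
so `m_i - 1 = m_{i+1}`, which is ejectable in the rows below `i` by induction.
-/

theorem List.getLast_le_of_isChain_gt {α : Type*} [Preorder α] {l : List α}
    (hl : l.IsChain (fun x y => y < x)) (hne : l ≠ []) {a : α} (ha : a ∈ l) :
    l.getLast hne ≤ a :=
  ((List.isChain_iff_pairwise.mp hl).imp (R := fun x y => y < x) (S := (· ≥ ·))
    (fun h => h.le)).rel_getLast ha

namespace Ejectable

theorem cons_getLast {R : List ℕ} (rest : List (List ℕ)) (hR : R.IsChain (fun x y => y < x))
    (hne : R ≠ []) (hpos : 0 < R.getLast hne) : Ejectable (R :: rest) (R.getLast hne) := by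
  refine ⟨R.getLast_mem hne, Or.inl fun hpred => ?_⟩
  have := List.getLast_le_of_isChain_gt hR hne hpred
  omega

theorem cons_of_isLeast_above {R : List ℕ} {rest : List (List ℕ)} {x y : ℕ} (hx : x ∈ R)
    (hyx : y < x) (hleast : ∀ z ∈ R, y < z → x ≤ z) (hy : Ejectable rest y) :
    Ejectable (R :: rest) x := by
  refine ⟨hx, or_iff_not_imp_left.mpr fun hpred => ?_⟩
  have hpred_eq : x - 1 = y := by
    by_contra hne
    have := hleast (x - 1) (not_not.mp hpred) (by omega)
    omega
  rwa [hpred_eq]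

end Ejectable

theorem rowOf_succ_eq_getElem {T : List (List ℕ)} {j : ℕ} (hj : j < T.length) :
    RowOf T (j + 1) = T[j] :=
  List.getD_eq_getElem _ _ hj

theorem rowOf_succ_mem {T : List (List ℕ)} {j : ℕ} (hj : j < T.length) : RowOf T (j + 1) ∈ T :=
  rowOf_succ_eq_getElem hj ▸ List.getElem_mem hj

theorem drop_eq_rowOf_succ_cons {T : List (List ℕ)} {j : ℕ} (hj : j < T.length) :
    T.drop j = RowOf T (j + 1) :: T.drop (j + 1) :=
  rowOf_succ_eq_getElem hj ▸ List.drop_eq_getElem_cons hj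

/-- the first-row entry of a bumping path is `P`-ejectable. -/
theorem statement4 (T : List (List ℕ)) (r c : ℕ) (m : ℕ → ℕ)
    (hT : IsDecreasingTableau T) (hrc : IsRemovable T r c)
    (hm : IsBumpingPath T r c m) :
    Ejectable T (m 1) := by
  obtain ⟨-, hpos, hdec, -⟩ := hT
  obtain ⟨hr1, hrT, hc1, hlen, -⟩ := hrc
  obtain ⟨hmr, hpath⟩ := hm
  obtain ⟨n, rfl⟩ := Nat.exists_eq_add_of_le' hr1
  subst hlen
  suffices h : ∀ j ≤ n, Ejectable (T.drop j) (m (j + 1)) by simpa using h 0 n.zero_le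
  intro j hj
  induction hj using Nat.decreasingInduction with
  | self =>
    have hrow := rowOf_succ_mem (T := T) (j := n) (by omega)
    have hne : RowOf T (n + 1) ≠ [] := List.ne_nil_of_length_pos (by omega)
    have hmr_last : m (n + 1) = (RowOf T (n + 1)).getLast hne := by
      rw [hmr, List.getLast_eq_getElem, List.getD_eq_getElem]
    rw [drop_eq_rowOf_succ_cons (by omega), hmr_last]
    exact Ejectable.cons_getLast _ (hdec _ hrow) hne (hpos _ hrow _ (List.getLast_mem hne))
  | of_succ j hj ih =>
    obtain ⟨hmem, hlt, hleast⟩ := hpath (j + 1) (by omega) (by omega)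
    rw [drop_eq_rowOf_succ_cons (by omega)]
    exact Ejectable.cons_of_isLeast_above hmem hlt hleast ih
end

section
/- The reverse row insertion algorithm Ψ is well-defined: given a decreasing tableau P, a P-removable cell s, and α ∈ {0,1}, the output tableau P' of Ψ(P, s, α) is again a decreasing tableau, and shape(P') equals shape(P) if α = 0, and shape(P) minus the cell s if α = 1. -/
/-!
Ψ visits the rows bottom to top and only ever replaces the entry `m_i` of row `i` by a value `v`
with `m_{i+1} ≤ v < m_i` that is absent from the row. As `m_i` is the smallest entry exceeding
`m_{i+1}`, the row stays strictly decreasing, and the row above still dominates it. The entry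
below `m_i` is at most `m_{i+1}` because the bumping path moves weakly right going up; it equals
`m_{i+1}` only when row `i+1` was a Dummy row, and then `m_{i+1} - 1` sits further right in row
`i+1`, which forces `m_{i+1}` into row `i` and rules out Direct Replacement. Row lengths never
change, apart from the cell deleted at the start when `α = 1`.
-/

def countGt (R : List ℕ) (m : ℕ) : ℕ := R.countP (m < ·)

section Row

variable {R : List ℕ} {j : ℕ}

lemma getD_mem (hj : j < R.length) : R.getD j 0 ∈ R := by
  rw [List.getD_eq_getElem _ _ hj]
  exact List.getElem_mem _

lemma exists_getD_eq_of_mem {x : ℕ} (hx : x ∈ R) : ∃ j < R.length, R.getD j 0 = x := by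
  obtain ⟨j, hj, rfl⟩ := List.mem_iff_getElem.mp hx
  exact ⟨j, hj, List.getD_eq_getElem _ _ hj⟩

lemma lt_length_of_getD_pos (h : 0 < R.getD j 0) : j < R.length := by
  by_contra hj
  rw [List.getD_eq_default _ _ (not_lt.mp hj)] at h
  exact lt_irrefl 0 h

lemma pairwise_gt_iff_getD :
    R.Pairwise (· > ·) ↔ ∀ i j, i < j → j < R.length → R.getD j 0 < R.getD i 0 := by
  rw [List.pairwise_iff_getElem]
  refine forall_congr' fun i => ⟨fun h j hij hj => ?_, fun h j hi hj hij => ?_⟩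
  · rw [List.getD_eq_getElem _ _ hj, List.getD_eq_getElem _ _ (hij.trans hj)]
    exact h j (hij.trans hj) hj hij
  · have := h j hij hj
    rwa [List.getD_eq_getElem _ _ hj, List.getD_eq_getElem _ _ hi] at this

lemma getD_le_getD (hR : R.Pairwise (· > ·)) {i j : ℕ} (hij : i ≤ j) :
    R.getD j 0 ≤ R.getD i 0 := by
  rcases hij.eq_or_lt with rfl | hij
  · rfl
  by_cases hj : j < R.length
  · exact (pairwise_gt_iff_getD.mp hR i j hij hj).le
  · rw [List.getD_eq_default _ _ (not_lt.mp hj)]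
    exact Nat.zero_le _

lemma countGt_cons {a : ℕ} (hR : (a :: R).Pairwise (· > ·)) (m : ℕ) :
    countGt (a :: R) m = if m < a then countGt R m + 1 else 0 := by
  split_ifs with hma
  · simp [countGt, hma]
  · simp only [countGt, List.countP_eq_zero, List.mem_cons, decide_eq_true_eq]
    rintro x (rfl | hx)
    · exact hma
    · exact fun hmx => hma (hmx.trans (List.rel_of_pairwise_cons hR hx))

-- No bound on `j` is needed: past the end of the row `getD` returns `0`.
lemma lt_getD_iff_lt_countGt (hR : R.Pairwise (· > ·)) {m j : ℕ} :
    m < R.getD j 0 ↔ j < countGt R m := by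
  induction R generalizing j with
  | nil => simp [countGt]
  | cons a R ih =>
    rw [countGt_cons hR]
    cases j with
    | zero => split_ifs <;> simp_all
    | succ j =>
      rw [List.getD_cons_succ, ih hR.of_cons]
      split_ifs with hma
      · omega
      · have hja : R.getD j 0 ≤ a := by simpa using getD_le_getD hR (Nat.zero_le (j + 1))
        simp only [not_lt_zero, iff_false, ← ih hR.of_cons, not_lt]
        exact hja.trans (not_lt.mp hma)

/-- The smallest entry of the strictly decreasing row `R` exceeding `m`; this is `m_i` when
`m = m_{i+1}`. -/
def bumpedEntry (R : List ℕ) (m : ℕ) : ℕ := R.getD (countGt R m - 1) 0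

lemma lt_bumpedEntry (hR : R.Pairwise (· > ·)) {m : ℕ} (hk : 0 < countGt R m) :
    m < bumpedEntry R m :=
  (lt_getD_iff_lt_countGt hR).mpr (by omega)

lemma getD_countGt_le (hR : R.Pairwise (· > ·)) (m : ℕ) : R.getD (countGt R m) 0 ≤ m :=
  not_lt.mp fun h => lt_irrefl _ ((lt_getD_iff_lt_countGt hR).mp h)

lemma bumpedEntry_le_of_mem (hR : R.Pairwise (· > ·)) {m x : ℕ} (hxR : x ∈ R) (hmx : m < x) :
    bumpedEntry R m ≤ x := by
  obtain ⟨p, -, rfl⟩ := exists_getD_eq_of_mem hxR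
  exact getD_le_getD hR (Nat.le_sub_one_of_lt ((lt_getD_iff_lt_countGt hR).mp hmx))

lemma min?_filter_lt_eq_bumpedEntry (hR : R.Pairwise (· > ·)) {m : ℕ} (hk : 0 < countGt R m) :
    ((R.filter fun y => decide (m < y)).min?).getD 0 = bumpedEntry R m := by
  have hm := lt_bumpedEntry hR hk
  rw [(List.min?_eq_some_iff).mpr, Option.getD_some]
  have hmem : bumpedEntry R m ∈ R :=
    getD_mem (lt_length_of_getD_pos (show 0 < bumpedEntry R m by omega))
  refine ⟨List.mem_filter.mpr ⟨hmem, by simpa using hm⟩, fun b hb => ?_⟩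
  obtain ⟨hbR, hmb⟩ := List.mem_filter.mp hb
  exact bumpedEntry_le_of_mem hR hbR (by simpa using hmb)

end Row

structure IsDecreasingRow (R : List ℕ) : Prop where
  ne_nil : R ≠ []
  pos : ∀ x ∈ R, 0 < x
  pairwise : R.Pairwise (· > ·)

/-- `R` can stand directly above `S` in a decreasing tableau. -/
def Dominates (R S : List ℕ) : Prop :=
  S.length ≤ R.length ∧ ∀ j < S.length, S.getD j 0 < R.getD j 0

lemma Dominates.of_prefix {R S S' : List ℕ} (h : Dominates R S) (hS : S' <+: S) :
    Dominates R S' := by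
  obtain ⟨t, rfl⟩ := hS
  refine ⟨le_trans (by simp) h.1, fun j hj => ?_⟩
  have := h.2 j (by simp; omega)
  rwa [List.getD_append _ _ _ _ hj] at this

lemma isDecreasingTableau_iff {T : List (List ℕ)} :
    IsDecreasingTableau T ↔ (∀ R ∈ T, IsDecreasingRow R) ∧ T.IsChain Dominates :=
  ⟨fun ⟨hne, hpos, hrow, hT⟩ =>
    ⟨fun R hR => ⟨hne R hR, hpos R hR, List.isChain_iff_pairwise.mp (hrow R hR)⟩, hT⟩,
   fun ⟨hrow, hT⟩ => ⟨fun R hR => (hrow R hR).ne_nil, fun R hR => (hrow R hR).pos,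
    fun R hR => List.isChain_iff_pairwise.mpr (hrow R hR).pairwise, hT⟩⟩

lemma isDecreasingTableau_nil : IsDecreasingTableau [] :=
  isDecreasingTableau_iff.mpr ⟨by simp, List.isChain_nil⟩

lemma isDecreasingTableau_cons {R : List ℕ} {T : List (List ℕ)} :
    IsDecreasingTableau (R :: T) ↔
      IsDecreasingRow R ∧ Dominates R (T.headD []) ∧ IsDecreasingTableau T := by
  have hdom : (∀ S ∈ T.head?, Dominates R S) ↔ Dominates R (T.headD []) := by
    cases T <;> simp [Dominates]
  simp only [isDecreasingTableau_iff, List.forall_mem_cons, List.isChain_cons, hdom]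
  tauto

lemma isDecreasingTableau_append_cons {U D : List (List ℕ)} {R : List ℕ} :
    IsDecreasingTableau (U ++ R :: D) ↔
      IsDecreasingTableau U ∧ (∀ S ∈ U.getLast?, Dominates S R) ∧
        IsDecreasingTableau (R :: D) := by
  simp only [isDecreasingTableau_iff, List.forall_mem_append, List.isChain_append,
    List.head?_cons, Option.mem_def, Option.some.injEq, forall_eq']
  tauto

lemma IsDecreasingTableau.infix {T L : List (List ℕ)} (hT : IsDecreasingTableau T)
    (hL : L <:+: T) : IsDecreasingTableau L := by
  rw [isDecreasingTableau_iff] at hT ⊢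
  exact ⟨fun R hR => hT.1 R (hL.subset hR), hT.2.infix hL⟩

lemma IsDecreasingTableau.pairwise_headD {T : List (List ℕ)} (hT : IsDecreasingTableau T) :
    (T.headD []).Pairwise (· > ·) := by
  cases T with
  | nil => exact List.Pairwise.nil
  | cons R T => exact (isDecreasingTableau_cons.mp hT).1.pairwise

section Replacement

variable {R : List ℕ} {j v : ℕ}

lemma mem_of_mem_replaceVal {old x : ℕ} (hx : x ∈ replaceVal R old v) : x = v ∨ x ∈ R := by
  obtain ⟨y, hy, rfl⟩ := List.mem_map.mp hx
  split_ifs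
  · exact Or.inl rfl
  · exact Or.inr hy

lemma not_mem_replaceVal {old : ℕ} (hv : v ≠ old) : old ∉ replaceVal R old v := by
  simp only [replaceVal, List.mem_map, not_exists, not_and]
  intro y _
  split_ifs with hy
  · exact hv
  · exact hy

lemma length_replaceVal (old : ℕ) : (replaceVal R old v).length = R.length :=
  List.length_map _

lemma getD_replaceVal_getD (hR : R.Pairwise (· > ·)) (hlo : R.getD (j + 1) 0 < v)
    (hhi : v < R.getD j 0) (i : ℕ) :
    (replaceVal R (R.getD j 0) v).getD i 0 = if i = j then v else R.getD i 0 := by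
  have hmap := List.getD_map R 0 (n := i) fun y => if y = R.getD j 0 then v else y
  rw [if_neg (by omega)] at hmap
  rw [replaceVal, hmap]
  by_cases hij : i = j
  · simp [hij]
  rw [if_neg hij]
  refine if_neg ?_
  rcases Nat.lt_or_gt_of_ne hij with hij | hij
  · exact (pairwise_gt_iff_getD.mp hR i j hij (lt_length_of_getD_pos (by omega))).ne'
  · have := getD_le_getD hR (show j + 1 ≤ i by omega)
    omega

lemma pairwise_replaceVal_getD (hR : R.Pairwise (· > ·)) (hlo : R.getD (j + 1) 0 < v)
    (hhi : v < R.getD j 0) : (replaceVal R (R.getD j 0) v).Pairwise (· > ·) := by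
  rw [pairwise_gt_iff_getD, length_replaceVal]
  intro p q hpq hq
  rw [getD_replaceVal_getD hR hlo hhi, getD_replaceVal_getD hR hlo hhi]
  split_ifs with hqj hpj
  · omega
  · have := getD_le_getD hR (show p ≤ j by omega)
    omega
  · have := getD_le_getD hR (show j + 1 ≤ q by omega)
    omega
  · exact pairwise_gt_iff_getD.mp hR p q hpq hq

lemma Dominates.replaceVal_getD_left {S : List ℕ} (hd : Dominates R S)
    (hR : R.Pairwise (· > ·)) (hlo : R.getD (j + 1) 0 < v) (hhi : v < R.getD j 0)
    (hS : S.getD j 0 < v) : Dominates (replaceVal R (R.getD j 0) v) S := by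
  refine ⟨(length_replaceVal _).symm ▸ hd.1, fun i hi => ?_⟩
  rw [getD_replaceVal_getD hR hlo hhi]
  split_ifs with hij
  · exact hij ▸ hS
  · exact hd.2 i hi

lemma Dominates.replaceVal_getD_right {R' : List ℕ} (hd : Dominates R' R)
    (hR : R.Pairwise (· > ·)) (hlo : R.getD (j + 1) 0 < v) (hhi : v < R.getD j 0) :
    Dominates R' (replaceVal R (R.getD j 0) v) := by
  refine ⟨(length_replaceVal _).symm ▸ hd.1, fun i hi => ?_⟩
  rw [length_replaceVal] at hi
  rw [getD_replaceVal_getD hR hlo hhi]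
  split_ifs with hij
  · exact hhi.trans (hij ▸ hd.2 i hi)
  · exact hd.2 i hi

lemma isDecreasingRow_replaceVal_getD (hR : IsDecreasingRow R) (hlo : R.getD (j + 1) 0 < v)
    (hhi : v < R.getD j 0) : IsDecreasingRow (replaceVal R (R.getD j 0) v) where
  ne_nil := by
    rw [← List.length_pos_iff, length_replaceVal]
    exact List.length_pos_iff.mpr hR.ne_nil
  pos x hx := (mem_of_mem_replaceVal hx).elim (fun h => by omega) (hR.pos x)
  pairwise := pairwise_replaceVal_getD hR.pairwise hlo hhi

end Replacement

-- The smallest entry of `R` exceeding `m` stands in a column where the head row of `T` has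
-- entries at most `m`.
def Fits (R : List ℕ) (T : List (List ℕ)) (m : ℕ) : Prop :=
  Dominates R (T.headD []) ∧ countGt (T.headD []) m < countGt R m

lemma fits_cons {R S : List ℕ} {T : List (List ℕ)} {x j : ℕ} (hR : R.Pairwise (· > ·))
    (hS : S.Pairwise (· > ·)) (hd : Dominates R S) (hxR : x < R.getD j 0)
    (hxS : ¬ x < S.getD j 0) : Fits R (S :: T) x := by
  rw [lt_getD_iff_lt_countGt hR] at hxR
  rw [lt_getD_iff_lt_countGt hS] at hxS
  exact ⟨hd, by simp only [List.headD_cons]; omega⟩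

-- In a Direct Replacement the entry below `m_i` is smaller than `m = m_{i+1}`: were it `m`, the
-- entry `m - 1` further right in that row would lie under an entry of `R` squeezed between
-- `m - 1` and `m`.
lemma getD_lt_of_not_mem {R S : List ℕ} {m : ℕ} (hR : R.Pairwise (· > ·))
    (hS : S.Pairwise (· > ·)) (hd : Dominates R S) (hk : countGt S m < countGt R m)
    (hmR : m ∉ R) (hm : 0 < m) (hmS : m ∈ S → m - 1 ∈ S) :
    S.getD (countGt R m - 1) 0 < m := by
  have hle : S.getD (countGt R m - 1) 0 ≤ m :=
    not_lt.mp fun h => by have := (lt_getD_iff_lt_countGt hS).mp h; omega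
  refine hle.lt_of_ne fun heq => ?_
  obtain ⟨p, hp, hpS⟩ := exists_getD_eq_of_mem
    (hmS (heq ▸ getD_mem (lt_length_of_getD_pos (by omega))))
  have hkp : countGt R m ≤ p := by
    by_contra hpk
    have := getD_le_getD hS (show p ≤ countGt R m - 1 by omega)
    omega
  have hRp : R.getD p 0 ≤ m := not_lt.mp fun h => by
    have := (lt_getD_iff_lt_countGt hR).mp h; omega
  have hRp' : R.getD p 0 = m := by have := hd.2 p hp; omega
  exact hmR (hRp' ▸ getD_mem (lt_of_lt_of_le hp hd.1))

/-- Loop invariant of `psiRows`: `L` are the rows still to be processed, `T` the processed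
rows below them, `m = m_{i+1}` and `a = α_{i+1}`. -/
structure PsiInvariant (L T : List (List ℕ)) (m : ℕ) (a : Bool) : Prop where
  upper : IsDecreasingTableau L
  lower : IsDecreasingTableau T
  -- when `α_{i+1} = 1`, `m_{i+1}` has left row `i+1` unless that row was a Dummy row
  flag : a = true → 0 < m ∧ (m ∈ T.headD [] → m - 1 ∈ T.headD [])
  fits : ∀ R ∈ L.getLast?, Fits R T m

section Step

variable {L T : List (List ℕ)} {R : List ℕ} {m : ℕ} {a : Bool}

lemma PsiInvariant.isDecreasingRow (h : PsiInvariant (L ++ [R]) T m a) : IsDecreasingRow R :=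
  (isDecreasingTableau_cons.mp (isDecreasingTableau_append_cons.mp h.upper).2.2).1

lemma PsiInvariant.fits_last (h : PsiInvariant (L ++ [R]) T m a) : Fits R T m :=
  h.fits R (by simp)

lemma PsiInvariant.cons {S : List ℕ} {a' : Bool} (h : PsiInvariant (L ++ [R]) T m a)
    (hS : IsDecreasingTableau (S :: T)) (hdom : ∀ R', Dominates R' R → Dominates R' S)
    (hSk : ¬ bumpedEntry R m < S.getD (countGt R m - 1) 0)
    (hflag : a' = true → bumpedEntry R m ∈ S → bumpedEntry R m - 1 ∈ S) :
    PsiInvariant L (S :: T) (bumpedEntry R m) a' := by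
  obtain ⟨hL, hLR, -⟩ := isDecreasingTableau_append_cons.mp h.upper
  have hR := h.isDecreasingRow.pairwise
  have hmi : m < bumpedEntry R m := lt_bumpedEntry hR (by have := h.fits_last.2; omega)
  refine ⟨hL, hS, fun ha => ⟨by omega, hflag ha⟩, fun R' hR' => ?_⟩
  have hR'R := hLR R' hR'
  exact fits_cons ((isDecreasingTableau_iff.mp hL).1 R' (List.mem_of_getLast? hR')).pairwise
    (isDecreasingTableau_cons.mp hS).1.pairwise (hdom R' hR'R)
    (hR'R.2 _ (lt_length_of_getD_pos (show 0 < bumpedEntry R m by omega))) hSk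

lemma PsiInvariant.keep {a' : Bool} (h : PsiInvariant (L ++ [R]) T m a)
    (hflag : a' = true → bumpedEntry R m ∈ R → bumpedEntry R m - 1 ∈ R) :
    PsiInvariant L (R :: T) (bumpedEntry R m) a' :=
  h.cons (isDecreasingTableau_cons.mpr ⟨h.isDecreasingRow, h.fits_last.1, h.lower⟩)
    (fun _ => id) (lt_irrefl _) hflag

lemma PsiInvariant.replace {v : ℕ} {a' : Bool} (h : PsiInvariant (L ++ [R]) T m a)
    (hmv : m ≤ v) (hv : v < bumpedEntry R m) (hvR : v ∉ R)
    (hcol : (T.headD []).getD (countGt R m - 1) 0 < v) :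
    PsiInvariant L (replaceVal R (bumpedEntry R m) v :: T) (bumpedEntry R m) a' := by
  have hR := h.isDecreasingRow
  have hk := h.fits_last.2
  have hlo : R.getD (countGt R m - 1 + 1) 0 < v := by
    rw [Nat.sub_add_cancel (by omega)]
    refine lt_of_le_of_ne ((getD_countGt_le hR.pairwise m).trans hmv) fun heq => hvR ?_
    exact heq ▸ getD_mem (lt_length_of_getD_pos (by omega))
  refine h.cons (isDecreasingTableau_cons.mpr ⟨isDecreasingRow_replaceVal_getD hR hlo hv,
      h.fits_last.1.replaceVal_getD_left hR.pairwise hlo hv hcol, h.lower⟩)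
    (fun R' hd => hd.replaceVal_getD_right hR.pairwise hlo hv) ?_
    (fun _ hmem => absurd hmem (not_mem_replaceVal hv.ne))
  rw [bumpedEntry, getD_replaceVal_getD hR.pairwise hlo hv, if_pos rfl]
  exact not_lt.mpr hv.le

lemma PsiInvariant.step (h : PsiInvariant (L ++ [R]) T m a) :
    PsiInvariant L ((psiRowStep R T m a).1 :: T) (psiRowStep R T m a).2.1
      (psiRowStep R T m a).2.2 := by
  have hR := h.isDecreasingRow.pairwise
  obtain ⟨hdom, hk⟩ := h.fits_last
  have hmi : m < bumpedEntry R m := lt_bumpedEntry hR (by omega)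
  have hcol : (T.headD []).getD (countGt R m - 1) 0 ≤ m := not_lt.mp fun hlt => by
    have := (lt_getD_iff_lt_countGt h.lower.pairwise_headD).mp hlt
    omega
  simp only [psiRowStep, min?_filter_lt_eq_bumpedEntry hR (show 0 < countGt R m by omega)]
  split_ifs with hdummy hdirect
  · exact h.keep fun _ _ => by simpa using hdummy
  · obtain ⟨ha, hmR⟩ : a = true ∧ m ∉ R := by simpa using hdirect
    exact h.replace le_rfl hmi hmR (getD_lt_of_not_mem hR h.lower.pairwise_headD hdom hk hmR
      (h.flag ha).1 (h.flag ha).2)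
  · split
    · next x hx =>
      rw [smallestEjectableBetween] at hx
      have hmx := (List.mem_filter.mp (List.min?_mem hx)).2
      simp only [Bool.and_eq_true, decide_eq_true_eq] at hmx
      exact h.replace hmx.1.2.le hmx.2
        (fun hxR => absurd hmx.2 (not_lt.mpr (bumpedEntry_le_of_mem hR hxR hmx.1.2))) (by omega)
    · exact h.keep (by simp)

end Step

lemma psiRows_append_singleton (L T : List (List ℕ)) (R : List ℕ) (m : ℕ) (a : Bool) :
    psiRows (L ++ [R]) T m a =
      psiRows L ((psiRowStep R T m a).1 :: T) (psiRowStep R T m a).2.1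
        (psiRowStep R T m a).2.2 := by
  induction L with
  | nil => rfl
  | cons S L ih => simp only [List.cons_append, psiRows, ih]

lemma length_psiRowStep (R : List ℕ) (T : List (List ℕ)) (m : ℕ) (a : Bool) :
    (psiRowStep R T m a).1.length = R.length := by
  simp only [psiRowStep]
  split_ifs
  · rfl
  · exact length_replaceVal _
  · split <;> simp [length_replaceVal]

lemma shape_psiRows (L T : List (List ℕ)) (m : ℕ) (a : Bool) :
    shape (psiRows L T m a).1 = shape L ++ shape T := by
  induction L with
  | nil => rfl
  | cons R L ih =>
    simp only [psiRows, shape, List.map_cons, List.cons_append, length_psiRowStep] at ih ⊢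
    rw [ih]

lemma PsiInvariant.isDecreasingTableau_psiRows {L T : List (List ℕ)} {m : ℕ} {a : Bool}
    (h : PsiInvariant L T m a) : IsDecreasingTableau (psiRows L T m a).1 := by
  induction L using List.reverseRecOn generalizing T m a with
  | nil => exact h.lower
  | append_singleton L R ih =>
    rw [psiRows_append_singleton]
    exact ih h.step

lemma IsDecreasingTableau.eq_nil_of_headD {D : List (List ℕ)} (hD : IsDecreasingTableau D)
    (h : (D.headD []).length = 0) : D = [] := by
  cases D with
  | nil => rfl
  | cons S D =>
    exact absurd (List.length_eq_zero_iff.mp h) (isDecreasingTableau_cons.mp hD).1.ne_nil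

lemma IsDecreasingTableau.filter_shape {T : List (List ℕ)} (hT : IsDecreasingTableau T) :
    (shape T).filter (fun n => decide (n ≠ 0)) = shape T := by
  refine List.filter_eq_self.mpr fun n hn => ?_
  obtain ⟨R, hR, rfl⟩ := List.mem_map.mp hn
  simpa using (isDecreasingTableau_iff.mp hT).1 R hR |>.ne_nil

lemma shapeMinus_append_cons (l s : List ℕ) (n : ℕ) :
    shapeMinus (l ++ n :: s) (l.length + 1) =
      l.filter (fun k => decide (k ≠ 0)) ++
        ((n - 1) :: s).filter (fun k => decide (k ≠ 0)) := by
  simp [shapeMinus, List.set_append_right]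

lemma IsRemovable.exists_eq_append_cons {P : List (List ℕ)} {r c : ℕ}
    (h : IsRemovable P r c) :
    ∃ U R D, P = U ++ R :: D ∧ r = U.length + 1 ∧ R.length = c ∧
      (D.headD []).length < c := by
  obtain ⟨hr1, hr2, -, hlen, hnext⟩ := h
  refine ⟨P.take (r - 1), P[r - 1], P.drop r, ?_, by simp; omega, ?_, ?_⟩
  · conv_lhs => rw [← List.take_append_drop (r - 1) P]
    rw [List.drop_eq_getElem_cons (by omega), Nat.sub_add_cancel hr1]
  · rwa [RowOf, List.getD_eq_getElem] at hlen
  · rwa [RowOf, Nat.add_sub_cancel, List.getD_eq_getElem?_getD, ← List.head?_drop,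
      ← List.headD_eq_head?_getD] at hnext

lemma psiInvariant_init_false {U D : List (List ℕ)} {R : List ℕ}
    (hP : IsDecreasingTableau (U ++ R :: D)) (hD : (D.headD []).length < R.length) :
    PsiInvariant (U ++ [R]) D 0 false := by
  obtain ⟨hR, hRD, -⟩ := isDecreasingTableau_cons.mp (isDecreasingTableau_append_cons.mp hP).2.2
  rw [show U ++ R :: D = U ++ [R] ++ D by simp] at hP
  refine ⟨hP.infix (List.prefix_append _ _).isInfix, hP.infix (List.suffix_append _ _).isInfix,
    by simp, ?_⟩
  simp only [List.getLast?_concat, Option.mem_def, Option.some.injEq, forall_eq']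
  refine ⟨hRD, List.countP_le_length.trans_lt (hD.trans_eq ?_)⟩
  exact (List.countP_eq_length.mpr fun x hx => by simpa using hR.pos x hx).symm

lemma psiInvariant_init_true {U D : List (List ℕ)} {R : List ℕ} {m : ℕ}
    (hP : IsDecreasingTableau (U ++ (R ++ [m]) :: D)) (hD : (D.headD []).length ≤ R.length) :
    PsiInvariant U (if R = [] then D else R :: D) m true := by
  obtain ⟨hU, hUR, hRD⟩ := isDecreasingTableau_append_cons.mp hP
  obtain ⟨hRm, hdomD, hD'⟩ := isDecreasingTableau_cons.mp hRD
  have hmR : ∀ x ∈ R, m < x := fun x hx =>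
    (List.pairwise_append.mp hRm.pairwise).2.2 x hx m (List.mem_singleton_self m)
  have hbase : IsDecreasingTableau (if R = [] then D else R :: D) ∧
      (if R = [] then D else R :: D).headD [] = R := by
    split_ifs with hR0
    · subst hR0
      rw [hD'.eq_nil_of_headD (by simpa using hD)]
      exact ⟨isDecreasingTableau_nil, rfl⟩
    · have hR : IsDecreasingRow R := ⟨hR0, fun x hx => hRm.pos x (by simp [hx]),
        hRm.pairwise.sublist (List.sublist_append_left R [m])⟩
      refine ⟨isDecreasingTableau_cons.mpr ⟨hR, ⟨hD, fun j hj => ?_⟩, hD'⟩, rfl⟩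
      have := hdomD.2 j hj
      rwa [List.getD_append _ _ _ _ (by omega)] at this
  refine ⟨hU, hbase.1, fun _ => ⟨hRm.pos m (by simp), fun hm => ?_⟩, fun S hS => ?_⟩
  · exact absurd (hmR m (hbase.2 ▸ hm)) (lt_irrefl m)
  · have hSR := hUR S hS
    have hSm := hSR.2 R.length (by simp)
    rw [List.getD_append_right _ _ _ _ le_rfl, Nat.sub_self, List.getD_cons_zero] at hSm
    rw [lt_getD_iff_lt_countGt
      ((isDecreasingTableau_iff.mp hU).1 S (List.mem_of_getLast? hS)).pairwise] at hSm
    rw [Fits, hbase.2]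
    exact ⟨hSR.of_prefix (List.prefix_append R [m]), List.countP_le_length.trans_lt hSm⟩

lemma shapeMinus_shape_append_concat_cons {U D : List (List ℕ)} {R : List ℕ} {m : ℕ}
    (hP : IsDecreasingTableau (U ++ (R ++ [m]) :: D)) (hD : (D.headD []).length ≤ R.length) :
    shapeMinus (shape (U ++ (R ++ [m]) :: D)) (U.length + 1) =
      shape U ++ shape (if R = [] then D else R :: D) := by
  obtain ⟨hU, -, hRD⟩ := isDecreasingTableau_append_cons.mp hP
  have hD' := (isDecreasingTableau_cons.mp hRD).2.2
  have hsh : shape (U ++ (R ++ [m]) :: D) = shape U ++ (R.length + 1) :: shape D := by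
    simp [shape]
  rw [hsh, ← List.length_map (f := List.length) (as := U), ← shape, shapeMinus_append_cons,
    hU.filter_shape, Nat.add_sub_cancel]
  split_ifs with hR0
  · subst hR0
    simp [hD'.eq_nil_of_headD (by simpa using hD), shape]
  · rw [List.filter_cons_of_pos (by simpa using hR0), hD'.filter_shape]
    rfl

lemma psi_append_cons_false (U D : List (List ℕ)) (R : List ℕ) :
    (psi (U ++ R :: D) (U.length + 1) false).1 = (psiRows (U ++ [R]) D 0 false).1 := by
  simp [psi, psiStage, psiUpper, psiBase, psiM, List.take_append, List.take_of_length_le]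

lemma psi_append_concat_cons_true (U D : List (List ℕ)) (R : List ℕ) (m : ℕ) :
    (psi (U ++ (R ++ [m]) :: D) (U.length + 1) true).1 =
      (psiRows U (if R = [] then D else R :: D) m true).1 := by
  simp [psi, psiStage, psiUpper, psiBase, psiM, RowOf]

/-- Ψ is well-defined: the output tableau is a decreasing tableau, of
the same shape if `α = 0` and of the shape with the cell `(r,c)` removed if `α = 1`. -/
theorem statement5 (P : List (List ℕ)) (r c : ℕ) (α : Bool)
    (hP : IsDecreasingTableau P) (hrc : IsRemovable P r c) :
    IsDecreasingTableau (psi P r α).1 ∧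
      shape (psi P r α).1 = if α then shapeMinus (shape P) r else shape P := by
  obtain ⟨U, R, D, rfl, rfl, rfl, hD⟩ := hrc.exists_eq_append_cons
  cases α
  · rw [psi_append_cons_false, shape_psiRows]
    exact ⟨(psiInvariant_init_false hP hD).isDecreasingTableau_psiRows, by simp [shape]⟩
  · obtain ⟨R, m, rfl⟩ :=
      (List.eq_nil_or_concat' R).resolve_left (List.ne_nil_of_length_pos (by omega))
    have hD' : (D.headD []).length ≤ R.length := by simpa using hD
    rw [psi_append_concat_cons_true, shape_psiRows, if_pos rfl,
      shapeMinus_shape_append_concat_cons hP hD']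
    exact ⟨(psiInvariant_init_true hP hD').isDecreasingTableau_psiRows, rfl⟩
end

section
/- Pieri property of reverse insertion: let Ψ(P, (r₁,c₁), α) = (P', m) and Ψ(P', (r₂,c₂), α') = (P'', m'), where (r₂,c₂) is a removable corner of P' with c₂ < c₁. Then m' > m. -/
/-!
Both ejected values are tops of bumping paths: `m` of the path of the corner `(r₁, c₁)` in
`P`, and `m'` of the path `w` of `(r₂, c₂)` in `P' = Ψ(P)`. Since `c₂ < c₁`, the second
corner lies in the part of `P'` that `Ψ` leaves alone apart from deleting `(r₁, c₁)`; the
path `w` climbs it and arrives below the rewritten rows at an ejectable value, above the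
value where the first path starts. In each rewritten row `i` the first insertion replaces
`m_i` by nothing or by some `x ≤ w_{i+1}` (for Indirect Replacement because `x` is the
smallest ejectable value in a window containing `w_{i+1}`), so `w_i`, the smallest entry of
the new row exceeding `w_{i+1}`, is an old entry exceeding `m_i`, and it is ejectable in
turn. As `m_i` never lies in the first column, if it was the only entry above `w_{i+1}`, its
left neighbour survives the replacement. At the top, `m = m_1 < w_1 = m'`.
-/

namespace List

variable {α : Type*}

theorem lt_length_of_mem_getD {L : List (List α)} {i : ℕ} {v : α} (hv : v ∈ L.getD i []) :
    i < L.length := by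
  by_contra h
  rw [List.getD_eq_default _ _ (by omega)] at hv
  exact List.not_mem_nil hv

theorem getLast_mem_tail {l : List α} (hl : 2 ≤ l.length) :
    l.getLast (List.ne_nil_of_length_pos (by omega)) ∈ l.tail := by
  obtain ⟨a, t, rfl⟩ := List.exists_cons_of_ne_nil (List.ne_nil_of_length_pos (l := l) (by omega))
  have ht : t ≠ [] := List.ne_nil_of_length_pos (by simp at hl; omega)
  rw [List.getLast_cons ht]
  exact List.getLast_mem ht

variable [Preorder α] {l : List α}

theorem getLast_lt_of_mem_dropLast (hl : l.Pairwise (· > ·)) (hne : l ≠ []) {y : α}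
    (hy : y ∈ l.dropLast) : l.getLast hne < y := by
  rw [← List.dropLast_append_getLast hne, List.pairwise_append] at hl
  exact hl.2.2 y hy _ (List.mem_singleton_self _)

theorem getLast_le_of_mem (hl : l.Pairwise (· > ·)) (hne : l ≠ []) {y : α} (hy : y ∈ l) :
    l.getLast hne ≤ y := by
  rw [← List.dropLast_append_getLast hne, List.mem_append, List.mem_singleton] at hy
  rcases hy with hy | rfl
  exacts [(getLast_lt_of_mem_dropLast hl hne hy).le, le_rfl]

end List

/-- The smallest entry of `R` exceeding `m` (`0` if there is none): the step
`m_{i+1} ↦ m_i` of a bumping path. -/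
def nextAbove (R : List ℕ) (m : ℕ) : ℕ := ((R.filter fun y => decide (m < y)).min?).getD 0

/-- The top of the bumping path through the rows `Rs` (listed top to bottom) started
from the value `v` just below them. -/
def bumpChain : List (List ℕ) → ℕ → ℕ
  | [], v => v
  | R :: rest, v => nextAbove R (bumpChain rest v)

theorem bumpChain_append (A C : List (List ℕ)) (v : ℕ) :
    bumpChain (A ++ C) v = bumpChain A (bumpChain C v) := by
  induction A with
  | nil => rfl
  | cons R rest ih => simp only [List.cons_append, bumpChain, ih]

section NextAbove

variable {R : List ℕ} {m : ℕ}

theorem nextAbove_spec (h : ∃ y ∈ R, m < y) :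
    nextAbove R m ∈ R ∧ m < nextAbove R m ∧ ∀ y ∈ R, m < y → nextAbove R m ≤ y := by
  obtain ⟨y, hy, hmy⟩ := h
  rcases hmin : (R.filter fun y => decide (m < y)).min? with _ | a
  · simp only [List.min?_eq_none_iff, List.filter_eq_nil_iff, decide_eq_true_eq] at hmin
    exact absurd hmy (hmin y hy)
  · have hE : nextAbove R m = a := by rw [nextAbove, hmin]; rfl
    simp only [List.min?_eq_some_iff, List.mem_filter, decide_eq_true_eq] at hmin
    exact hE ▸ ⟨hmin.1.1, hmin.1.2, fun z hz hmz => hmin.2 z ⟨hz, hmz⟩⟩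

theorem nextAbove_mem_tail (hR : R.Pairwise (· > ·)) (h : ∃ y ∈ R.tail, m < y) :
    nextAbove R m ∈ R.tail := by
  obtain ⟨y, hy, hmy⟩ := h
  cases R with
  | nil => simp at hy
  | cons a t =>
    obtain ⟨hmem, -, hle⟩ := nextAbove_spec ⟨y, List.mem_cons_of_mem a hy, hmy⟩
    rcases List.mem_cons.mp hmem with ha | ht
    · have := (List.pairwise_cons.mp hR).1 y hy
      have := hle y (List.mem_cons_of_mem a hy) hmy
      omega
    · exact ht

theorem nextAbove_zero (hR : R.Pairwise (· > ·)) (hpos : ∀ x ∈ R, 0 < x) (hne : R ≠ []) :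
    nextAbove R 0 = R.getLast hne := by
  have hlast := List.getLast_mem hne
  obtain ⟨hmem, -, hle⟩ := nextAbove_spec ⟨_, hlast, hpos _ hlast⟩
  exact le_antisymm (hle _ hlast (hpos _ hlast)) (List.getLast_le_of_mem hR hne hmem)

end NextAbove

/-- The relation between a row `X` of a decreasing tableau and the row `Y` below it. -/
def RowDominates (X Y : List ℕ) : Prop :=
  Y.length ≤ X.length ∧ ∀ j < Y.length, Y.getD j 0 < X.getD j 0

namespace RowDominates

variable {X Y : List ℕ}

theorem getElem_lt (h : RowDominates X Y) {j : ℕ} (hj : j < Y.length) :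
    Y[j] < X[j]'(lt_of_lt_of_le hj h.1) := by
  simpa only [List.getD_eq_getElem _ _ hj, List.getD_eq_getElem _ _ (lt_of_lt_of_le hj h.1)]
    using h.2 j hj

theorem exists_gt (h : RowDominates X Y) {y : ℕ} (hy : y ∈ Y) : ∃ x ∈ X, y < x := by
  obtain ⟨j, hj, rfl⟩ := List.getElem_of_mem hy
  exact ⟨_, List.getElem_mem _, h.getElem_lt hj⟩

theorem exists_gt_of_mem_tail (h : RowDominates X Y) {y : ℕ} (hy : y ∈ Y.tail) :
    ∃ x ∈ X.tail, y < x := by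
  obtain ⟨j, hj, rfl⟩ := List.getElem_of_mem hy
  have hjX : j < X.tail.length := by simp only [List.length_tail] at hj ⊢; have := h.1; omega
  refine ⟨_, List.getElem_mem hjX, ?_⟩
  simp only [List.getElem_tail]
  exact h.getElem_lt _

theorem trans {Z : List ℕ} (hXY : RowDominates X Y) (hYZ : RowDominates Y Z) :
    RowDominates X Z :=
  ⟨hYZ.1.trans hXY.1, fun j hj => (hYZ.2 j hj).trans (hXY.2 j (lt_of_lt_of_le hj hYZ.1))⟩

theorem of_prefix_right {Y' : List ℕ} (h : RowDominates X Y) (hY : Y' <+: Y) :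
    RowDominates X Y' := by
  refine ⟨hY.length_le.trans h.1, fun j hj => ?_⟩
  rw [List.getD_eq_getElem _ _ hj, hY.getElem hj, ← List.getD_eq_getElem _ 0]
  exact h.2 j (lt_of_lt_of_le hj hY.length_le)

theorem of_prefix_left {X' : List ℕ} (h : RowDominates X Y) (hX : X' <+: X)
    (hlen : Y.length ≤ X'.length) : RowDominates X' Y := by
  refine ⟨hlen, fun j hj => ?_⟩
  rw [List.getD_eq_getElem _ _ (lt_of_lt_of_le hj hlen), hX.getElem, ← List.getD_eq_getElem _ 0]
  exact h.2 j hj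

end RowDominates

instance : IsTrans (List ℕ) RowDominates := ⟨fun _ _ _ => RowDominates.trans⟩

namespace IsDecreasingTableau

variable {P : List (List ℕ)}

theorem pairwise_rowDominates (hP : IsDecreasingTableau P) : P.Pairwise RowDominates :=
  List.isChain_iff_pairwise.mp hP.2.2.2

theorem pairwise_gt (hP : IsDecreasingTableau P) {R : List ℕ} (hR : R ∈ P) :
    R.Pairwise (· > ·) :=
  List.isChain_iff_pairwise.mp (hP.2.2.1 R hR)

theorem length_le_of_mem_above {A C : List (List ℕ)} {T R : List ℕ}
    (hP : IsDecreasingTableau (A ++ T :: C)) (hR : R ∈ A) : T.length ≤ R.length :=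
  ((List.pairwise_append.mp hP.pairwise_rowDominates).2.2 R hR T List.mem_cons_self).1

end IsDecreasingTableau

theorem IsRemovable.exists_eq_append_cons_s8 {P : List (List ℕ)} {r c : ℕ}
    (h : IsRemovable P r c) :
    ∃ A T C, P = A ++ T :: C ∧ A.length + 1 = r ∧ T.length = c ∧
      ∀ Y ∈ C.head?, Y.length < c := by
  obtain ⟨hr, hrP, -, hT, hC⟩ := h
  have hr' : r - 1 < P.length := by omega
  refine ⟨P.take (r - 1), P[r - 1], P.drop r, ?_, by simp; omega, ?_, ?_⟩
  · conv_lhs => rw [← List.take_append_drop (r - 1) P]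
    rw [List.drop_eq_getElem_cons hr', Nat.sub_add_cancel hr]
  · rwa [RowOf, List.getD_eq_getElem _ _ hr'] at hT
  · intro Y hY
    simp only [RowOf, add_tsub_cancel_right] at hC
    rw [List.head?_drop, Option.mem_def] at hY
    simpa [List.getD_eq_getElem?_getD, hY] using hC

section Ejectable

theorem ejectableB_iff (T : List (List ℕ)) (x : ℕ) :
    ejectableB T x = true ↔ Ejectable T x := by
  induction T generalizing x with
  | nil => simp [ejectableB, Ejectable]
  | cons R rest ih => simp [ejectableB, Ejectable, ih]

variable {R : List ℕ} {B : List (List ℕ)}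

theorem ejectable_cons_nextAbove {w : ℕ} (hw : Ejectable B w) (h : ∃ y ∈ R, w < y) :
    Ejectable (R :: B) (nextAbove R w) := by
  obtain ⟨hmem, hlt, hle⟩ := nextAbove_spec h
  refine ⟨hmem, or_iff_not_imp_left.mpr fun hpred => ?_⟩
  have : nextAbove R w - 1 = w := by
    by_contra hne
    have := hle _ (not_not.mp hpred) (by omega)
    omega
  rwa [this]

theorem ejectable_cons_getLast (hR : R.Pairwise (· > ·)) (hpos : ∀ x ∈ R, 0 < x)
    (hne : R ≠ []) : Ejectable (R :: B) (R.getLast hne) := by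
  have hlast := List.getLast_mem hne
  refine ⟨hlast, Or.inl fun hpred => ?_⟩
  have := List.getLast_le_of_mem hR hne hpred
  have := hpos _ hlast
  omega

variable {lo hi : ℕ}

theorem mem_ejectableCandidates {w : ℕ} (hw : Ejectable B w) (hlo : lo < w) (hhi : w < hi) :
    w ∈ (B.headD []).filter fun x => ejectableB B x && decide (lo < x) && decide (x < hi) := by
  cases B with
  | nil => exact hw.elim
  | cons H rest => simpa [(ejectableB_iff _ _).mpr hw, hlo, hhi] using hw.1

theorem smallestEjectableBetween_eq_some {x : ℕ} (h : smallestEjectableBetween B lo hi = some x) :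
    x < hi ∧ ∀ w, Ejectable B w → lo < w → w < hi → x ≤ w := by
  rw [smallestEjectableBetween, List.min?_eq_some_iff] at h
  have hx := (List.mem_filter.mp h.1).2
  simp only [Bool.and_eq_true, decide_eq_true_eq] at hx
  exact ⟨hx.2, fun w hw hlo hhi => h.2 w (mem_ejectableCandidates hw hlo hhi)⟩

theorem smallestEjectableBetween_eq_none (h : smallestEjectableBetween B lo hi = none) {w : ℕ}
    (hw : Ejectable B w) (hlo : lo < w) : hi ≤ w := by
  rw [smallestEjectableBetween, List.min?_eq_none_iff] at h
  by_contra hhi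
  have hmem := mem_ejectableCandidates hw hlo (not_le.mp hhi)
  rw [h] at hmem
  exact List.not_mem_nil hmem

end Ejectable

section RowStep

variable {R : List ℕ} {B : List (List ℕ)} {m w : ℕ} {a : Bool}

theorem replaceVal_self (R : List ℕ) (v : ℕ) : replaceVal R v v = R :=
  List.map_id'' (fun y => by split_ifs with h <;> simp [h]) R

theorem mem_replaceVal_of_ne {y v x : ℕ} (hy : y ∈ R) (hne : y ≠ v) :
    y ∈ replaceVal R v x :=
  List.mem_map.mpr ⟨y, hy, if_neg hne⟩

theorem psiRowStep_snd : (psiRowStep R B m a).2.1 = nextAbove R m := by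
  simp only [psiRowStep]
  split_ifs <;> (try split) <;> rfl

theorem psiRowStep_fst_length : (psiRowStep R B m a).1.length = R.length := by
  simp only [psiRowStep]
  split_ifs <;> (try split) <;> simp [replaceVal]

/-- Dummy and No Replacement count as replacing `m_i` by itself. -/
theorem psiRowStep_fst_eq_replaceVal (hex : ∃ y ∈ R, m < y) (hmw : m < w) (hw : Ejectable B w) :
    ∃ x ≤ w, (psiRowStep R B m a).1 = replaceVal R (nextAbove R m) x := by
  obtain ⟨-, -, hle⟩ := nextAbove_spec hex
  have hdef : ((R.filter fun y => decide (m < y)).min?).getD 0 = nextAbove R m := rfl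
  simp only [psiRowStep, hdef]
  split_ifs with hdummy
  · have : nextAbove R m - 1 ≤ m := by
      by_contra hgt
      have := hle _ (List.contains_iff_mem.mp hdummy) (by omega)
      omega
    exact ⟨nextAbove R m, by omega, (replaceVal_self _ _).symm⟩
  · exact ⟨m, hmw.le, rfl⟩
  · split
    · next x hx =>
      obtain ⟨hxhi, hxmin⟩ := smallestEjectableBetween_eq_some hx
      refine ⟨x, ?_, rfl⟩
      by_cases hwhi : w < nextAbove R m
      exacts [hxmin w hw hmw hwhi, by omega]
    · next hnone =>
      exact ⟨nextAbove R m, smallestEjectableBetween_eq_none hnone hw hmw,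
        (replaceVal_self _ _).symm⟩

/-- If the replaced entry was the only one above `w`, its left neighbour still is. -/
theorem exists_gt_mem_replaceVal (hR : R.Pairwise (· > ·)) {v x : ℕ} (hv : v ∈ R.tail)
    (hw : ∃ y ∈ R, w < y) : ∃ y ∈ replaceVal R v x, w < y := by
  obtain ⟨y, hy, hwy⟩ := hw
  by_cases hyv : y = v
  · cases R with
    | nil => simp at hy
    | cons b t =>
      have hvb : v < b := (List.pairwise_cons.mp hR).1 v hv
      exact ⟨b, mem_replaceVal_of_ne List.mem_cons_self hvb.ne', by omega⟩
  · exact ⟨y, mem_replaceVal_of_ne hy hyv, hwy⟩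

theorem nextAbove_replaceVal (hR : R.Pairwise (· > ·)) (hm : ∃ y ∈ R.tail, m < y)
    (hmw : m < w) (hw : ∃ y ∈ R, w < y) {x : ℕ} (hxw : x ≤ w) :
    nextAbove R m < nextAbove (replaceVal R (nextAbove R m) x) w ∧
      nextAbove (replaceVal R (nextAbove R m) x) w ∈ R := by
  obtain ⟨y, hy, hmy⟩ := hm
  obtain ⟨-, -, hle⟩ := nextAbove_spec ⟨y, List.mem_of_mem_tail hy, hmy⟩
  have habove :
      ∀ y ∈ replaceVal R (nextAbove R m) x, w < y → nextAbove R m < y ∧ y ∈ R := by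
    intro y hy hwy
    obtain ⟨z, hz, rfl⟩ := List.mem_map.mp hy
    split_ifs at hwy ⊢ with hz'
    · omega
    · exact ⟨lt_of_le_of_ne (hle z hz (by omega)) (Ne.symm hz'), hz⟩
  obtain ⟨hmem, hlt, -⟩ :=
    nextAbove_spec (exists_gt_mem_replaceVal hR (nextAbove_mem_tail hR ⟨y, hy, hmy⟩) hw)
  exact habove _ hmem hlt

theorem psiRowStep_invariant (hR : R.Pairwise (· > ·)) (hm : ∃ y ∈ R.tail, m < y)
    (hmw : m < w) (hB : Ejectable B w) (hw : ∃ y ∈ R, w < y) :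
    (psiRowStep R B m a).2.1 ∈ R.tail ∧ nextAbove (psiRowStep R B m a).1 w ∈ R ∧
      (psiRowStep R B m a).2.1 < nextAbove (psiRowStep R B m a).1 w ∧
      Ejectable ((psiRowStep R B m a).1 :: B) (nextAbove (psiRowStep R B m a).1 w) := by
  have hmtail := nextAbove_mem_tail hR hm
  obtain ⟨y, hy, hmy⟩ := hm
  obtain ⟨x, hxw, hrow⟩ :=
    psiRowStep_fst_eq_replaceVal (a := a) ⟨y, List.mem_of_mem_tail hy, hmy⟩ hmw hB
  obtain ⟨hlt, hmem⟩ := nextAbove_replaceVal hR ⟨y, hy, hmy⟩ hmw hw hxw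
  rw [psiRowStep_snd, hrow]
  exact ⟨hmtail, hmem, hlt, ejectable_cons_nextAbove hB (exists_gt_mem_replaceVal hR hmtail hw)⟩

end RowStep

section PsiRows

variable (B : List (List ℕ)) (m : ℕ) (a : Bool)

theorem psiRows_snd (Rs : List (List ℕ)) : (psiRows Rs B m a).2.1 = bumpChain Rs m := by
  induction Rs with
  | nil => rfl
  | cons R rest ih => simp only [psiRows, bumpChain, psiRowStep_snd, ih]

theorem psiRows_fst_eq_append (Rs : List (List ℕ)) :
    ∃ Rs', (psiRows Rs B m a).1 = Rs' ++ B ∧ Rs'.map List.length = Rs.map List.length := by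
  induction Rs with
  | nil => exact ⟨[], rfl, rfl⟩
  | cons R rest ih =>
    obtain ⟨Rs', hfst, hlen⟩ := ih
    refine ⟨_ :: Rs', congrArg (List.cons _) hfst, ?_⟩
    simp only [List.map_cons, psiRowStep_fst_length, hlen]

end PsiRows

/-- `m` and `v` are the values of the first and of the second bumping path just below the
rows `Rs`; the second path runs in the output of the first. -/
theorem psiRows_invariant (Rs B : List (List ℕ)) (m v : ℕ) (a : Bool)
    (hRs : Rs.Pairwise RowDominates) (hdec : ∀ R ∈ Rs, R.Pairwise (· > ·))
    (hmv : m < v) (hv : Ejectable B v)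
    (hlast : ∀ R ∈ Rs.getLast?, (∃ y ∈ R.tail, m < y) ∧ ∃ y ∈ R, v < y) :
    (psiRows Rs B m a).2.1 < bumpChain ((psiRows Rs B m a).1.take Rs.length) v ∧
      Ejectable (psiRows Rs B m a).1 (bumpChain ((psiRows Rs B m a).1.take Rs.length) v) ∧
      ∀ R ∈ Rs.head?, (psiRows Rs B m a).2.1 ∈ R.tail ∧
        bumpChain ((psiRows Rs B m a).1.take Rs.length) v ∈ R := by
  induction Rs with
  | nil => exact ⟨hmv, hv, by simp⟩
  | cons R rest ih =>
    rw [List.pairwise_cons] at hRs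
    obtain ⟨hlt, hej, hhead⟩ := ih hRs.2 (fun S hS => hdec S (List.mem_cons_of_mem R hS))
      (fun S hS => hlast S (by cases rest <;> simp_all [List.getLast?_cons]))
    have hstep : (∃ y ∈ R.tail, (psiRows rest B m a).2.1 < y) ∧
        ∃ y ∈ R, bumpChain ((psiRows rest B m a).1.take rest.length) v < y := by
      cases rest with
      | nil => exact hlast R rfl
      | cons S rest =>
        obtain ⟨hS₁, hS₂⟩ := hhead S rfl
        have hRS := hRs.1 S List.mem_cons_self
        exact ⟨hRS.exists_gt_of_mem_tail hS₁, hRS.exists_gt hS₂⟩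
    obtain ⟨h₁, h₂, h₃, h₄⟩ :=
      psiRowStep_invariant (a := (psiRows rest B m a).2.2) (hdec R List.mem_cons_self)
        hstep.1 hlt hej hstep.2
    simp only [psiRows, List.length_cons, List.take_succ_cons, bumpChain]
    exact ⟨h₃, h₄, by simpa using ⟨h₁, h₂⟩⟩

theorem bumpChain_take_mem_headD {L : List (List ℕ)} (hL : L.Pairwise RowDominates) {i v : ℕ}
    (hv : v ∈ L.getD i []) (hej : Ejectable (L.drop i) v) :
    bumpChain (L.take i) v ∈ L.headD [] ∧ Ejectable L (bumpChain (L.take i) v) := by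
  induction i generalizing v with
  | zero =>
    cases L with
    | nil => exact hej.elim
    | cons H t => exact ⟨hv, hej⟩
  | succ i ih =>
    have hi := List.lt_length_of_mem_getD hv
    rw [List.getD_eq_getElem _ _ hi] at hv
    have hdom : RowDominates L[i] L[i + 1] :=
      List.pairwise_iff_getElem.mp hL i (i + 1) (by omega) hi (by omega)
    have htake : L.take (i + 1) = L.take i ++ [L[i]] := by
      rw [List.take_add_one, List.getElem?_eq_getElem (by omega)]; rfl
    rw [htake, bumpChain_append]
    refine ih ?_ ?_
    · rw [List.getD_eq_getElem _ _ (by omega)]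
      exact (nextAbove_spec (hdom.exists_gt hv)).1
    · rw [List.drop_eq_getElem_cons (by omega)]
      exact ejectable_cons_nextAbove hej (hdom.exists_gt hv)

section Psi

theorem psi_snd (P : List (List ℕ)) (r : ℕ) (α : Bool) :
    (psi P r α).2 = bumpChain (psiUpper P r α) (psiM P r α) :=
  psiRows_snd _ _ _ _

theorem psi_snd_eq_bumpChain {Q : List (List ℕ)} {k : ℕ} {T : List ℕ} (hT : Q.getD k [] = T)
    (hdec : T.Pairwise (· > ·)) (hpos : ∀ x ∈ T, 0 < x) (hne : T ≠ []) (α : Bool) :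
    (psi Q (k + 1) α).2 = bumpChain (Q.take k) (T.getLast hne) := by
  subst hT
  have hk : k < Q.length := List.lt_length_of_mem_getD (List.getLast_mem hne)
  rw [psi_snd]
  cases α
  · simp only [psiUpper, psiM, Bool.false_eq_true, if_false, List.take_add_one,
      List.getElem?_eq_getElem hk, Option.toList_some, bumpChain_append]
    rw [← nextAbove_zero hdec hpos hne, List.getD_eq_getElem _ _ hk]
    rfl
  · simp only [psiUpper, psiM, if_true, RowOf, add_tsub_cancel_right,
      List.getLast?_eq_some_getLast hne, Option.getD_some]

variable {A C : List (List ℕ)} {T : List ℕ}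

theorem psi_append_cons_false_s8 :
    psi (A ++ T :: C) (A.length + 1) false =
      ((psiRows (A ++ [T]) C 0 false).1, (psiRows (A ++ [T]) C 0 false).2.1) := by
  simp [psi, psiStage, psiUpper, psiBase, psiM, List.take_append, List.take_of_length_le]

theorem psi_append_cons_true (hT : T.dropLast ≠ []) :
    psi (A ++ T :: C) (A.length + 1) true =
      ((psiRows A (T.dropLast :: C) (T.getLast?.getD 0) true).1,
        (psiRows A (T.dropLast :: C) (T.getLast?.getD 0) true).2.1) := by
  simp [psi, psiStage, psiUpper, psiBase, psiM, RowOf, hT]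

end Psi

/-- `Ψ` about to process the rows `U` above the base `B`, starting from `m₀`, for a corner
in column `c`. -/
structure PieriSetup (U B : List (List ℕ)) (m₀ c : ℕ) : Prop where
  pairwise : (U ++ B).Pairwise RowDominates
  pairwise_gt : ∀ R ∈ U ++ B, R.Pairwise (· > ·)
  pos : ∀ R ∈ U ++ B, ∀ x ∈ R, 0 < x
  le_length : ∀ R ∈ U, c ≤ R.length
  lt_tail : ∀ R ∈ U.getLast?, ∃ y ∈ R.tail, m₀ < y
  lt_headD : ∀ y ∈ B.headD [], m₀ < y

namespace PieriSetup

variable {A C : List (List ℕ)} {T : List ℕ}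

theorem of_append_cons_false (hP : IsDecreasingTableau (A ++ T :: C)) (hT : 2 ≤ T.length) :
    PieriSetup (A ++ [T]) C 0 T.length := by
  have hPC : A ++ [T] ++ C = A ++ T :: C := by simp
  have hTP : T ∈ A ++ T :: C := by simp
  refine ⟨hPC ▸ hP.pairwise_rowDominates, fun R hR => hP.pairwise_gt (hPC ▸ hR),
    fun R hR => hP.2.1 R (hPC ▸ hR), fun R hR => ?_, fun R hR => ?_, fun y hy => ?_⟩
  · rcases List.mem_append.mp hR with hR | hR
    · exact hP.length_le_of_mem_above hR
    · rw [List.mem_singleton.mp hR]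
  · simp only [List.getLast?_append, List.getLast?_singleton, Option.some_or,
      Option.mem_def, Option.some.injEq] at hR
    subst hR
    have h1 : 0 < T.tail.length := by simp; omega
    exact ⟨_, List.getElem_mem h1, hP.2.1 T hTP _ (List.mem_of_mem_tail (List.getElem_mem h1))⟩
  · cases C with
    | nil => exact (List.not_mem_nil hy).elim
    | cons H t => exact hP.2.1 H (by simp) y hy

theorem of_append_cons_true (hP : IsDecreasingTableau (A ++ T :: C)) (hT : 2 ≤ T.length)
    (hC : ∀ Y ∈ C.head?, Y.length < T.length) :
    PieriSetup A (T.dropLast :: C) (T.getLast?.getD 0) T.length := by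
  have hne : T ≠ [] := List.ne_nil_of_length_pos (by omega)
  have hm₀ : T.getLast?.getD 0 = T.getLast hne := by
    rw [List.getLast?_eq_some_getLast hne, Option.getD_some]
  obtain ⟨hA, ⟨hTC, hC'⟩, hAT⟩ := by
    simpa only [List.pairwise_append, List.pairwise_cons] using hP.pairwise_rowDominates
  have hClen : ∀ Y ∈ C, Y.length < T.length := by
    cases C with
    | nil => simp
    | cons H t =>
      intro Y hY
      have hH := hC H rfl
      rcases List.mem_cons.mp hY with rfl | hY
      · exact hH
      · exact lt_of_le_of_lt ((List.pairwise_cons.mp hC').1 Y hY).1 hH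
  have hTdrop : ∀ Y ∈ C, RowDominates T.dropLast Y := fun Y hY =>
    (hTC Y hY).of_prefix_left (List.dropLast_prefix T)
      (by rw [List.length_dropLast]; have := hClen Y hY; omega)
  have hmem : ∀ R ∈ A ++ T.dropLast :: C, R ∈ A ++ T :: C ∨ R = T.dropLast := by
    intro R hR; simp only [List.mem_append, List.mem_cons] at hR ⊢; tauto
  refine ⟨?_, fun R hR => ?_, fun R hR => ?_, fun R hR => hP.length_le_of_mem_above hR,
    fun R hR => ?_, fun y hy => ?_⟩
  · simp only [List.pairwise_append, List.pairwise_cons, List.mem_cons]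
    refine ⟨hA, ⟨hTdrop, hC'⟩, fun R hR Y hY => ?_⟩
    rcases hY with rfl | hY
    · exact (hAT R hR T List.mem_cons_self).of_prefix_right (List.dropLast_prefix T)
    · exact hAT R hR Y (List.mem_cons_of_mem T hY)
  · rcases hmem R hR with hR | rfl
    · exact hP.pairwise_gt hR
    · exact (hP.pairwise_gt (by simp)).sublist (List.dropLast_prefix T).sublist
  · rcases hmem R hR with hR | rfl
    · exact hP.2.1 R hR
    · exact fun x hx => hP.2.1 T (by simp) x (List.mem_of_mem_dropLast hx)
  · rw [hm₀]
    exact (hAT R (List.mem_of_getLast? hR) T List.mem_cons_self).exists_gt_of_mem_tail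
      (List.getLast_mem_tail hT)
  · rw [hm₀]
    exact List.getLast_lt_of_mem_dropLast (hP.pairwise_gt (by simp)) hne hy

variable {U B : List (List ℕ)} {m₀ c : ℕ}

theorem lt_bumpChain (hS : PieriSetup U B m₀ c) (a : Bool) {i : ℕ} (hne : B.getD i [] ≠ []) :
    (psiRows U B m₀ a).2.1 <
      bumpChain ((psiRows U B m₀ a).1.take (U.length + i)) ((B.getD i []).getLast hne) := by
  obtain ⟨U', hQ, hlen⟩ := psiRows_fst_eq_append B m₀ a U
  have hU' : U'.length = U.length := by simpa using congrArg List.length hlen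
  have hiB : i < B.length := List.lt_length_of_mem_getD (List.getLast_mem hne)
  have hBi : B.getD i [] ∈ U ++ B := by
    rw [List.getD_eq_getElem _ _ hiB]; exact List.mem_append_right U (List.getElem_mem hiB)
  obtain ⟨hvB, hvej⟩ := bumpChain_take_mem_headD
    (hS.pairwise.sublist (List.sublist_append_right U B)) (List.getLast_mem hne) (by
      rw [List.drop_eq_getElem_cons hiB, ← List.getD_eq_getElem _ [] hiB]
      exact ejectable_cons_getLast (hS.pairwise_gt _ hBi) (hS.pos _ hBi) hne)
  have hdom : ∀ R ∈ U.getLast?, RowDominates R (B.headD []) := by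
    intro R hR
    obtain ⟨H, t, rfl⟩ := List.exists_cons_of_ne_nil (List.ne_nil_of_length_pos hiB.pos)
    exact (List.pairwise_append.mp hS.pairwise).2.2 R (List.mem_of_getLast? hR) H
      List.mem_cons_self
  obtain ⟨hlt, -, -⟩ := psiRows_invariant U B m₀ _ a
    (hS.pairwise.sublist (List.sublist_append_left U B))
    (fun R hR => hS.pairwise_gt R (List.mem_append_left B hR)) (hS.lt_headD _ hvB) hvej
    (fun R hR => ⟨hS.lt_tail R hR, (hdom R hR).exists_gt hvB⟩)
  rw [hQ, List.take_left' hU'] at hlt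
  rwa [hQ, List.take_append, List.take_of_length_le (by omega), hU', Nat.add_sub_cancel_left,
    bumpChain_append]

theorem psiRows_snd_lt (hS : PieriSetup U B m₀ c) {a α' : Bool} {r c₂ : ℕ}
    (h2 : IsRemovable (psiRows U B m₀ a).1 r c₂) (hc : c₂ < c) :
    (psiRows U B m₀ a).2.1 < (psi (psiRows U B m₀ a).1 r α').2 := by
  obtain ⟨U', hQ, hlen⟩ := psiRows_fst_eq_append B m₀ a U
  have hU' : U'.length = U.length := by simpa using congrArg List.length hlen
  obtain ⟨hr, -, hc₂, hrow, -⟩ := h2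
  obtain ⟨k, rfl⟩ : ∃ k, r = k + 1 := ⟨r - 1, by omega⟩
  simp only [RowOf, add_tsub_cancel_right, hQ] at hrow
  have hk : U.length ≤ k := by
    by_contra hk
    have hlenk : (U'.getD k []).length = (U.getD k []).length := by
      rw [← List.getD_map U' [] List.length, ← List.getD_map U [] List.length, hlen]
    rw [List.getD_append _ _ _ _ (by omega), hlenk, List.getD_eq_getElem _ _ (by omega)] at hrow
    have hkU : k < U.length := by omega
    have := hS.le_length _ (List.getElem_mem hkU)
    omega
  obtain ⟨i, rfl⟩ : ∃ i, k = U.length + i := ⟨k - U.length, by omega⟩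
  have hrowB : (U' ++ B).getD (U.length + i) [] = B.getD i [] := by
    rw [List.getD_append_right _ _ _ _ (by omega), hU', Nat.add_sub_cancel_left]
  rw [hrowB] at hrow
  have hne : B.getD i [] ≠ [] := by rintro h; rw [h] at hrow; simp at hrow; omega
  have hBi : B.getD i [] ∈ U ++ B := List.mem_append_right U (by
    rw [List.getD_eq_getElem _ _ (List.lt_length_of_mem_getD (List.getLast_mem hne))]
    exact List.getElem_mem _)
  rw [← hQ] at hrowB
  rw [psi_snd_eq_bumpChain hrowB (hS.pairwise_gt _ hBi) (hS.pos _ hBi) hne]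
  exact hS.lt_bumpChain a hne

end PieriSetup

/-- Pieri property of reverse insertion: successive reverse insertions
at cells with `c₂ < c₁` eject values with `m' > m`. -/
theorem statement8 (P : List (List ℕ)) (r₁ c₁ r₂ c₂ : ℕ) (α α' : Bool)
    (hP : IsDecreasingTableau P) (h1 : IsRemovable P r₁ c₁)
    (h2 : IsRemovable (psi P r₁ α).1 r₂ c₂) (hc : c₂ < c₁) :
    (psi (psi P r₁ α).1 r₂ α').2 > (psi P r₁ α).2 := by
  obtain ⟨A, T, C, rfl, rfl, rfl, hC⟩ := h1.exists_eq_append_cons_s8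
  have hT : 2 ≤ T.length := by have := h2.2.2.1; omega
  obtain ⟨U, B, m₀, hψ, hS⟩ : ∃ U B m₀, psi (A ++ T :: C) (A.length + 1) α =
      ((psiRows U B m₀ α).1, (psiRows U B m₀ α).2.1) ∧ PieriSetup U B m₀ T.length := by
    cases α
    · exact ⟨_, _, _, psi_append_cons_false_s8, .of_append_cons_false hP hT⟩
    · exact ⟨_, _, _, psi_append_cons_true (List.ne_nil_of_length_pos (by simp; omega)),
        .of_append_cons_true hP hT hC⟩
  rw [hψ] at h2 ⊢
  exact hS.psiRows_snd_lt h2 hc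
end
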